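/- arXiv:math/0412364 — 3 statements merged into one kernel-verified Lean document; each statement's English description precedes it below -/
import Mathlib

section
/- Let T be a densely defined closed symmetric operator on a complex Hilbert space H, and suppose D is a self-adjoint extension of T. Then the deficiency spaces Ker(T* - i) and Ker(T* + i) have the same Hilbert dimension. -/
open LinearPMap MeasureTheory
open scoped InnerProductSpace

variable {H : Type*} [NormedAddCommGroup H] [InnerProductSpace ℂ H] [CompleteSpace H]

/-- The deficiency space `{x ∈ dom T* : T* x = c • x}` of an unbounded operator `T`. -/
noncomputable def deficiencySpace (T : H →ₗ.[ℂ] H) (c : ℂ) : Submodule ℂ H where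
  carrier := {x | ∃ hx : x ∈ T.adjoint.domain, T.adjoint ⟨x, hx⟩ = c • x}
  zero_mem' := by
    refine ⟨T.adjoint.domain.zero_mem, ?_⟩
    have h0 : (⟨0, T.adjoint.domain.zero_mem⟩ : T.adjoint.domain) = 0 := rfl
    rw [h0, LinearPMap.map_zero, smul_zero]
  add_mem' := by
    rintro x y ⟨hx, hx'⟩ ⟨hy, hy'⟩
    refine ⟨add_mem hx hy, ?_⟩
    have h : (⟨x + y, add_mem hx hy⟩ : T.adjoint.domain) = ⟨x, hx⟩ + ⟨y, hy⟩ := rfl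
    rw [h, LinearPMap.map_add, hx', hy', smul_add]
  smul_mem' := by
    rintro a x ⟨hx, hx'⟩
    refine ⟨Submodule.smul_mem _ a hx, ?_⟩
    have h : (⟨a • x, Submodule.smul_mem _ a hx⟩ : T.adjoint.domain) = a • (⟨x, hx⟩ : T.adjoint.domain) := rfl
    rw [h, LinearPMap.map_smul, hx', smul_comm]

/-- A partially defined operator is symmetric if `⟪T x, y⟫ = ⟪x, T y⟫` on its domain. -/
def IsSymmetricPMap (T : H →ₗ.[ℂ] H) : Prop :=
  ∀ x y : T.domain, ⟪(T x : H), (y : H)⟫_ℂ = ⟪(x : H), (T y : H)⟫_ℂ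


set_option linter.unusedSectionVars false
set_option maxHeartbeats 1000000

/-- The operator `T + c`, as a plain linear map on the domain of `T`. -/
noncomputable def opAdd (T : H →ₗ.[ℂ] H) (c : ℂ) : T.domain →ₗ[ℂ] H where
  toFun u := T u + c • (u : H)
  map_add' u v := by
    simp only [LinearPMap.map_add, Submodule.coe_add, smul_add]; abel
  map_smul' a u := by
    simp only [LinearPMap.map_smul, Submodule.coe_smul, RingHom.id_apply, smul_add,
      smul_comm a c]

lemma opAdd_apply (T : H →ₗ.[ℂ] H) (c : ℂ) (u : T.domain) :
    opAdd T c u = T u + c • (u : H) := rfl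

lemma isSymmetric_of_selfAdjoint (D : H →ₗ.[ℂ] H) (hdense : Dense (D.domain : Set H))
    (hD : D.adjoint = D) : IsSymmetricPMap D := by
  have h := D.adjoint_isFormalAdjoint hdense
  rw [hD] at h
  exact h

lemma adjoint_isClosed' (T : H →ₗ.[ℂ] H) (hT : Dense (T.domain : Set H)) :
    T.adjoint.IsClosed := by
  have : (T.adjoint.graph : Set (H × H)) =
      ⋂ x : T.domain, {p : H × H | ⟪p.2, (x : H)⟫_ℂ = ⟪p.1, T x⟫_ℂ} := by
    ext ⟨y, z⟩
    simp only [SetLike.mem_coe, mem_graph_iff, Set.mem_iInter, Set.mem_setOf_eq]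
    constructor
    · rintro ⟨u, hu, rfl⟩ x
      have := T.adjoint_isFormalAdjoint hT u x
      rwa [hu] at this
    · intro h
      have hy : y ∈ T.adjoint.domain :=
        T.mem_adjoint_domain_of_exists y ⟨z, fun x => h x⟩
      exact ⟨⟨y, hy⟩, rfl, adjoint_apply_eq hT _ fun x => h x⟩
  unfold LinearPMap.IsClosed
  rw [this]
  exact isClosed_iInter fun x => isClosed_eq
    (Continuous.inner continuous_snd continuous_const)
    (Continuous.inner continuous_fst continuous_const)

lemma normSq_opAdd (D : H →ₗ.[ℂ] H) (hsym : IsSymmetricPMap D) {c : ℂ}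
    (hc : (starRingEnd ℂ) c = -c) (hc1 : ‖c‖ = 1) (u : D.domain) :
    ‖opAdd D c u‖ ^ 2 = ‖D u‖ ^ 2 + ‖(u : H)‖ ^ 2 := by
  have hre : (⟪(D u : H), c • (u : H)⟫_ℂ).re = 0 := by
    have h1 : (starRingEnd ℂ) ⟪(D u : H), (u : H)⟫_ℂ = ⟪(D u : H), (u : H)⟫_ℂ := by
      rw [inner_conj_symm]; exact (hsym u u).symm
    have h2 : ⟪(D u : H), c • (u : H)⟫_ℂ = c * ⟪(D u : H), (u : H)⟫_ℂ := inner_smul_right _ _ _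
    have him : (⟪(D u : H), (u : H)⟫_ℂ).im = 0 := by
      have := congrArg Complex.im h1
      simp only [Complex.conj_im] at this
      linarith
    have hcre : c.re = 0 := by
      have := congrArg Complex.re hc
      simp only [Complex.conj_re, Complex.neg_re] at this
      linarith
    rw [h2, Complex.mul_re, him, hcre]
    ring
  rw [opAdd_apply, @norm_add_sq ℂ _ _ _ _, RCLike.re_to_complex, hre, norm_smul, hc1]
  ring

lemma norm_le_norm_opAdd (D : H →ₗ.[ℂ] H) (hsym : IsSymmetricPMap D) {c : ℂ}
    (hc : (starRingEnd ℂ) c = -c) (hc1 : ‖c‖ = 1) (u : D.domain) :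
    ‖(u : H)‖ ≤ ‖opAdd D c u‖ := by
  have h := normSq_opAdd D hsym hc hc1 u
  nlinarith [norm_nonneg (opAdd D c u), norm_nonneg (u : H), sq_nonneg ‖D u‖]

lemma surjective_opAdd (D : H →ₗ.[ℂ] H) (hdense : Dense (D.domain : Set H))
    (hD : D.adjoint = D) {c : ℂ} (hc : (starRingEnd ℂ) c = -c) (hc1 : ‖c‖ = 1) :
    Function.Surjective (opAdd D c) := by
  have hsym : IsSymmetricPMap D := isSymmetric_of_selfAdjoint D hdense hD
  have hclosed : D.IsClosed := by
    have := adjoint_isClosed' D hdense; rwa [hD] at this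
  have hc0 : c ≠ 0 := by intro h; rw [h] at hc1; simp at hc1
  rw [← LinearMap.range_eq_top]
  set R := LinearMap.range (opAdd D c) with hR
  have hRclosed : IsClosed (R : Set H) := by
    apply IsSeqClosed.isClosed
    intro x y hmem hlim
    choose u hu using fun n => LinearMap.mem_range.mp (hmem n)
    have hub : ∀ n m : ℕ, ‖(u n : H) - (u m : H)‖ ≤ ‖x n - x m‖ := by
      intro n m
      have h1 : opAdd D c (u n - u m) = x n - x m := by
        rw [_root_.map_sub, hu, hu]
      have h2 := norm_le_norm_opAdd D hsym hc hc1 (u n - u m)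
      rwa [h1, Submodule.coe_sub] at h2
    have hxC : CauchySeq x := hlim.cauchySeq
    have huC : CauchySeq (fun n => (u n : H)) := by
      rw [Metric.cauchySeq_iff] at hxC ⊢
      intro ε hε
      obtain ⟨N, hN⟩ := hxC ε hε
      refine ⟨N, fun m hm n hn => ?_⟩
      have := hN m hm n hn
      rw [dist_eq_norm] at this ⊢
      exact lt_of_le_of_lt (hub m n) this
    obtain ⟨z, hz⟩ := cauchySeq_tendsto_of_complete huC
    have hDlim : Filter.Tendsto (fun n => x n - c • (u n : H)) Filter.atTop
        (nhds (y - c • z)) := hlim.sub (hz.const_smul c)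
    have hgraph : (z, y - c • z) ∈ D.graph := by
      apply hclosed.mem_of_tendsto (hz.prodMk_nhds hDlim)
      filter_upwards with n
      have : x n - c • (u n : H) = D (u n) := by
        rw [← hu n, opAdd_apply]; abel
      rw [this]
      exact D.mem_graph (u n)
    rw [mem_graph_iff] at hgraph
    obtain ⟨v, hv1, hv2⟩ := hgraph
    refine LinearMap.mem_range.mpr ⟨v, ?_⟩
    rw [opAdd_apply, hv2]
    simp only [hv1]
    abel
  have horth : Rᗮ = ⊥ := by
    rw [Submodule.eq_bot_iff]
    intro y hy
    rw [Submodule.mem_orthogonal] at hy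
    have hy' : ∀ x : D.domain, ⟪(D x : H) + c • (x : H), y⟫_ℂ = 0 := fun x =>
      hy _ (LinearMap.mem_range.mpr ⟨x, rfl⟩)
    have hDxy : ∀ x : D.domain, ⟪(D x : H), y⟫_ℂ = c * ⟪(x : H), y⟫_ℂ := by
      intro x
      have := hy' x
      rw [inner_add_left, inner_smul_left, hc] at this
      linear_combination this
    have hfact : ∀ x : D.domain, ⟪c • y, (x : H)⟫_ℂ = ⟪y, (D x : H)⟫_ℂ := by
      intro x
      rw [inner_smul_left, hc, ← inner_conj_symm y (D x : H), hDxy x, map_mul,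
        inner_conj_symm, hc]
    have hmemadj : y ∈ D.adjoint.domain :=
      D.mem_adjoint_domain_of_exists y ⟨c • y, hfact⟩
    have happ : D.adjoint ⟨y, hmemadj⟩ = c • y :=
      adjoint_apply_eq hdense ⟨y, hmemadj⟩ fun x => hfact x
    have hdom : y ∈ D.domain := by rw [← hD]; exact hmemadj
    have key : ∀ (x : H) (hx : x ∈ D.adjoint.domain) (hx' : x ∈ D.domain),
        D.adjoint ⟨x, hx⟩ = D ⟨x, hx'⟩ := by
      rw [hD]; intro x hx hx'; rfl
    have hDy : D ⟨y, hdom⟩ = c • y := (key y hmemadj hdom).symm.trans happ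
    have hsy := hsym ⟨y, hdom⟩ ⟨y, hdom⟩
    rw [hDy] at hsy
    rw [inner_smul_left, inner_smul_right, hc] at hsy
    have h2 : (2 : ℂ) * c * ⟪y, y⟫_ℂ = 0 := by linear_combination -hsy
    have h3 : ⟪y, y⟫_ℂ = 0 := by
      rcases mul_eq_zero.mp h2 with h | h
      · exact absurd h (by simp [hc0])
      · exact h
    exact inner_self_eq_zero.mp h3
  have : R.topologicalClosure = ⊤ := Submodule.topologicalClosure_eq_top_iff.mpr horth
  rwa [hRclosed.submodule_topologicalClosure_eq] at this

lemma mem_deficiencySpace_iff (T : H →ₗ.[ℂ] H) (c : ℂ) (x : H) :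
    x ∈ deficiencySpace T c ↔ ∃ hx : x ∈ T.adjoint.domain, T.adjoint ⟨x, hx⟩ = c • x :=
  Iff.rfl

lemma orthogonal_range_opAdd (T : H →ₗ.[ℂ] H) (hdense : Dense (T.domain : Set H))
    {c : ℂ} (hc : (starRingEnd ℂ) c = -c) :
    (LinearMap.range (opAdd T c))ᗮ = deficiencySpace T c := by
  ext y
  rw [Submodule.mem_orthogonal, mem_deficiencySpace_iff]
  constructor
  · intro hy
    have hy' : ∀ x : T.domain, ⟪(T x : H) + c • (x : H), y⟫_ℂ = 0 := fun x =>
      hy _ (LinearMap.mem_range.mpr ⟨x, rfl⟩)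
    have hDxy : ∀ x : T.domain, ⟪(T x : H), y⟫_ℂ = c * ⟪(x : H), y⟫_ℂ := by
      intro x
      have := hy' x
      rw [inner_add_left, inner_smul_left, hc] at this
      linear_combination this
    have hfact : ∀ x : T.domain, ⟪c • y, (x : H)⟫_ℂ = ⟪y, (T x : H)⟫_ℂ := by
      intro x
      rw [inner_smul_left, hc, ← inner_conj_symm y (T x : H), hDxy x, map_mul,
        inner_conj_symm, hc]
    have hmemadj : y ∈ T.adjoint.domain :=
      T.mem_adjoint_domain_of_exists y ⟨c • y, hfact⟩
    exact ⟨hmemadj, adjoint_apply_eq hdense ⟨y, hmemadj⟩ fun x => hfact x⟩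
  · rintro ⟨hx, hx'⟩ v hv
    obtain ⟨u, rfl⟩ := LinearMap.mem_range.mp hv
    have h1 := T.adjoint_isFormalAdjoint hdense ⟨y, hx⟩ u
    rw [hx'] at h1
    have h1' : ⟪c • y, (u : H)⟫_ℂ = ⟪y, (T u : H)⟫_ℂ := h1
    have h2 : ⟪(T u : H), y⟫_ℂ = c * ⟪(u : H), y⟫_ℂ := by
      rw [← inner_conj_symm (T u : H) y, ← h1', inner_smul_left, map_mul, hc,
        inner_conj_symm, _root_.map_neg, hc]
      ring
    rw [opAdd_apply, inner_add_left, inner_smul_left, hc, h2]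
    ring

lemma map_orthogonal_unitary (U : H ≃ₗᵢ[ℂ] H) (M : Submodule ℂ H) :
    Submodule.map (U.toLinearEquiv : H →ₗ[ℂ] H) Mᗮ
      = (Submodule.map (U.toLinearEquiv : H →ₗ[ℂ] H) M)ᗮ := by
  ext z
  constructor
  · intro hz
    rw [Submodule.mem_map] at hz
    obtain ⟨w, hw, rfl⟩ := hz
    rw [Submodule.mem_orthogonal] at hw ⊢
    rintro x hx
    rw [Submodule.mem_map] at hx
    obtain ⟨m, hm, rfl⟩ := hx
    show ⟪(U m : H), U w⟫_ℂ = 0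
    rw [U.inner_map_map]
    exact hw m hm
  · intro hz
    rw [Submodule.mem_orthogonal] at hz
    rw [Submodule.mem_map]
    refine ⟨U.symm z, ?_, by show U (U.symm z) = z; simp⟩
    rw [Submodule.mem_orthogonal]
    intro m hm
    have h := U.inner_map_map m (U.symm z)
    rw [U.apply_symm_apply] at h
    rw [← h]
    exact hz _ (Submodule.mem_map.mpr ⟨m, hm, rfl⟩)

/-- If a densely defined closed symmetric operator `T` admits a self-adjoint extension `D`,
then the deficiency spaces `Ker(T* - i)` and `Ker(T* + i)` have the same Hilbert dimension,
i.e. they are isometrically isomorphic as Hilbert spaces. -/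
theorem deficiencySpaces_isometric_of_selfAdjoint_extension
    (T D : H →ₗ.[ℂ] H) (hdense : Dense (T.domain : Set H))
    (hclosed : T.IsClosed) (hsym : IsSymmetricPMap T)
    (hD : D.adjoint = D) (hTD : T ≤ D) :
    Nonempty ((deficiencySpace T Complex.I) ≃ₗᵢ[ℂ] (deficiencySpace T (-Complex.I))) := by
  classical
  have hsubset : T.domain ≤ D.domain := hTD.1
  have hdenseD : Dense (D.domain : Set H) := hdense.mono hsubset
  have hsymD : IsSymmetricPMap D := isSymmetric_of_selfAdjoint D hdenseD hD
  have hcI : (starRingEnd ℂ) Complex.I = -Complex.I := Complex.conj_I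
  have hcI' : (starRingEnd ℂ) (-Complex.I) = -(-Complex.I) := by simp
  have hnI : ‖Complex.I‖ = 1 := by simp
  have hnI' : ‖-Complex.I‖ = 1 := by simp
  have hinj : ∀ (c : ℂ), (starRingEnd ℂ) c = -c → ‖c‖ = 1 →
      Function.Injective (opAdd D c) := by
    intro c hc hc1 a b hab
    have h := norm_le_norm_opAdd D hsymD hc hc1 (a - b)
    rw [_root_.map_sub, hab, sub_self, norm_zero] at h
    have h0 : ((a - b : D.domain) : H) = 0 := norm_le_zero_iff.mp h
    rw [Submodule.coe_sub, sub_eq_zero] at h0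
    exact Subtype.coe_injective h0
  set ep := LinearEquiv.ofBijective (opAdd D Complex.I)
      ⟨hinj _ hcI hnI, surjective_opAdd D hdenseD hD hcI hnI⟩ with hep
  set em := LinearEquiv.ofBijective (opAdd D (-Complex.I))
      ⟨hinj _ hcI' hnI', surjective_opAdd D hdenseD hD hcI' hnI'⟩ with hem
  have hUnorm : ∀ y, ‖(ep.symm.trans em) y‖ = ‖y‖ := by
    intro y
    have h1 := normSq_opAdd D hsymD hcI hnI (ep.symm y)
    have h2 := normSq_opAdd D hsymD hcI' hnI' (ep.symm y)
    have h3 : opAdd D Complex.I (ep.symm y) = y := ep.apply_symm_apply y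
    have h4 : (ep.symm.trans em) y = opAdd D (-Complex.I) (ep.symm y) := rfl
    rw [h3] at h1
    rw [h4]
    have h5 : ‖opAdd D (-Complex.I) (ep.symm y)‖ ^ 2 = ‖y‖ ^ 2 := by rw [h2, ← h1]
    have h6 := congrArg Real.sqrt h5
    rwa [Real.sqrt_sq (norm_nonneg _), Real.sqrt_sq (norm_nonneg _)] at h6
  set U : H ≃ₗᵢ[ℂ] H := ⟨ep.symm.trans em, hUnorm⟩ with hU
  have hmap : ∀ u : T.domain, U (opAdd T Complex.I u) = opAdd T (-Complex.I) u := by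
    intro u
    set v : D.domain := ⟨(u : H), hsubset u.2⟩ with hv
    have hTu : (T u : H) = D v := hTD.2 rfl
    have h1 : opAdd T Complex.I u = opAdd D Complex.I v := by
      rw [opAdd_apply, opAdd_apply, hTu]
    have h2 : opAdd T (-Complex.I) u = opAdd D (-Complex.I) v := by
      rw [opAdd_apply, opAdd_apply, hTu]
    have h3 : ep.symm (opAdd D Complex.I v) = v := by
      have h : opAdd D Complex.I v = ep v := rfl
      rw [h, ep.symm_apply_apply]
    show (ep.symm.trans em) (opAdd T Complex.I u) = _
    rw [h1, LinearEquiv.trans_apply, h3, h2]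
    rfl
  have hrange :
      Submodule.map (U.toLinearEquiv : H →ₗ[ℂ] H) (LinearMap.range (opAdd T Complex.I))
        = LinearMap.range (opAdd T (-Complex.I)) := by
    ext z
    simp only [Submodule.mem_map, LinearMap.mem_range]
    constructor
    · rintro ⟨w, ⟨u, rfl⟩, rfl⟩
      exact ⟨u, (hmap u).symm⟩
    · rintro ⟨u, rfl⟩
      exact ⟨opAdd T Complex.I u, ⟨u, rfl⟩, hmap u⟩
  have hA := orthogonal_range_opAdd T hdense hcI
  have hB := orthogonal_range_opAdd T hdense hcI'
  rw [← hA, ← hB, ← hrange, ← map_orthogonal_unitary U _]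
  exact ⟨LinearEquiv.isometryOfInner
    (U.toLinearEquiv.submoduleMap (LinearMap.range (opAdd T Complex.I))ᗮ)
    (fun x y => by
      rw [Submodule.coe_inner, Submodule.coe_inner, LinearEquiv.submoduleMap_apply,
        LinearEquiv.submoduleMap_apply]
      exact U.inner_map_map (x : H) (y : H))⟩
end

section
/- Let T be a densely defined closed symmetric operator on a complex Hilbert space H with equal deficiency indices, and let u : Ker(T* - i) → Ker(T* + i) be a unitary isomorphism. Define T_u on the domain dom(T_u) = {ξ + η + u(η) : ξ ∈ dom(T), η ∈ Ker(T* - i)} by T_u(ξ + η + u(η)) = T(ξ) + iη - i·u(η). Then T_u is a symmetric operator. -/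
open LinearPMap MeasureTheory
open scoped InnerProductSpace

variable {H : Type*} [NormedAddCommGroup H] [InnerProductSpace ℂ H] [CompleteSpace H]

lemma deficiency_inner (T : H →ₗ.[ℂ] H) (hdense : Dense (T.domain : Set H))
    (c : ℂ) (η : deficiencySpace T c) (ξ : T.domain) :
    ⟪(η : H), (T ξ : H)⟫_ℂ = (starRingEnd ℂ c) * ⟪(η : H), (ξ : H)⟫_ℂ := by
  obtain ⟨hm, heq⟩ := η.2
  have h := (LinearPMap.adjoint_isFormalAdjoint hdense) ⟨(η : H), hm⟩ ξ
  rw [heq] at h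
  rw [← h, inner_smul_left]

lemma deficiency_inner' (T : H →ₗ.[ℂ] H) (hdense : Dense (T.domain : Set H))
    (c : ℂ) (η : deficiencySpace T c) (ξ : T.domain) :
    ⟪(T ξ : H), (η : H)⟫_ℂ = c * ⟪(ξ : H), (η : H)⟫_ℂ := by
  rw [← inner_conj_symm, deficiency_inner T hdense c η ξ, map_mul, inner_conj_symm]
  simp

/-- Given a densely defined closed symmetric operator `T` with equal deficiency indices,
witnessed by a unitary isomorphism `u : Ker(T* - i) ≃ Ker(T* + i)`, the von Neumann extension
`T_u`, defined on `{ξ + η + u η}` by `T_u (ξ + η + u η) = T ξ + i η - i u η`, is symmetric. -/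
theorem vonNeumannExtension_symmetric
    (T : H →ₗ.[ℂ] H) (hdense : Dense (T.domain : Set H))
    (hclosed : T.IsClosed) (hsym : IsSymmetricPMap T)
    (u : (deficiencySpace T Complex.I) ≃ₗᵢ[ℂ] (deficiencySpace T (-Complex.I))) :
    ∀ (ξ₁ ξ₂ : T.domain) (η₁ η₂ : deficiencySpace T Complex.I),
      ⟪(T ξ₁ : H) + Complex.I • (η₁ : H) - Complex.I • ((u η₁ : H)),
        ((ξ₂ : H) + (η₂ : H) + ((u η₂ : H)))⟫_ℂ =
      ⟪((ξ₁ : H) + (η₁ : H) + ((u η₁ : H))),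
        (T ξ₂ : H) + Complex.I • (η₂ : H) - Complex.I • ((u η₂ : H))⟫_ℂ := by
  intro ξ₁ ξ₂ η₁ η₂
  have hu : ∀ a b : deficiencySpace T Complex.I, ⟪((u a : H)), ((u b : H))⟫_ℂ = ⟪(a : H), (b : H)⟫_ℂ :=
    fun a b => u.inner_map_map a b
  simp only [inner_add_left, inner_add_right, inner_sub_left, inner_sub_right,
    inner_smul_left, inner_smul_right,
    deficiency_inner T hdense Complex.I, deficiency_inner T hdense (-Complex.I),
    deficiency_inner' T hdense Complex.I, deficiency_inner' T hdense (-Complex.I),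
    hsym ξ₁ ξ₂, hu, _root_.map_neg, Complex.conj_I]
  ring
end

section
/- Let T be a densely defined closed operator on a complex Hilbert space H. Then T*T + 1 is injective on its domain and surjective onto H, and its inverse is a bounded operator on H. -/
open LinearPMap MeasureTheory
open scoped InnerProductSpace

variable {H : Type*} [NormedAddCommGroup H] [InnerProductSpace ℂ H] [CompleteSpace H]

/-! Coercivity: `re ⟪T*T x + x, x⟫ = ‖T x‖² + ‖x‖² ≥ ‖x‖²`, so `‖x‖ ≤ ‖T*T x + x‖`, which gives
injectivity and the bound `1` on the inverse. Surjectivity: since `T` is closed, its graph is a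
closed subspace of the Hilbert space `H ⊕ H`. The orthogonal projection of `(z, 0)` onto it is some
`(x, T x)` with `(z - x, -T x) ⊥ (y, T y)` for every `y ∈ dom T`, i.e. `⟪z - x, y⟫ = ⟪T x, T y⟫`;
this says exactly that `T x ∈ dom T*` and `T* T x = z - x`. -/

namespace LinearPMap

variable {𝕜 E F : Type*} [RCLike 𝕜] [NormedAddCommGroup E] [InnerProductSpace 𝕜 E]
  [NormedAddCommGroup F] [InnerProductSpace 𝕜 F] {T : E →ₗ.[𝕜] F}

variable (T) in
-- `WithLp 2` because `E × F` itself carries the sup norm, not a Hilbert-space structure.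
def graphL2 : Submodule 𝕜 (WithLp 2 (E × F)) :=
  T.graph.comap (WithLp.linearEquiv 2 𝕜 (E × F)).toLinearMap

theorem mem_graphL2_iff {p : WithLp 2 (E × F)} :
    p ∈ T.graphL2 ↔ ∃ x : T.domain, ((x : E), T x) = WithLp.ofLp p :=
  T.mem_graph_iff'

theorem IsClosed.isClosed_graphL2 (hT : T.IsClosed) :
    _root_.IsClosed (T.graphL2 : Set (WithLp 2 (E × F))) :=
  hT.preimage (WithLp.prod_continuous_ofLp 2 E F)

variable [CompleteSpace E]

theorem re_inner_adjoint_apply_add_self (hT : Dense (T.domain : Set E)) (x : T.domain)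
    (hx : (T x : F) ∈ T†.domain) :
    RCLike.re ⟪T† ⟨T x, hx⟩ + (x : E), (x : E)⟫_𝕜 = ‖T x‖ ^ 2 + ‖(x : E)‖ ^ 2 := by
  rw [inner_add_left, adjoint_isFormalAdjoint hT ⟨T x, hx⟩ x, RCLike.re.map_add,
    ← norm_sq_eq_re_inner, ← norm_sq_eq_re_inner]

theorem norm_le_norm_adjoint_apply_add (hT : Dense (T.domain : Set E)) (x : T.domain)
    (hx : (T x : F) ∈ T†.domain) :
    ‖(x : E)‖ ≤ ‖T† ⟨T x, hx⟩ + (x : E)‖ := by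
  rcases (norm_nonneg (x : E)).eq_or_lt with hzero | hpos
  · exact hzero ▸ norm_nonneg _
  refine le_of_mul_le_mul_right ?_ hpos
  calc ‖(x : E)‖ * ‖(x : E)‖ ≤ ‖T x‖ ^ 2 + ‖(x : E)‖ ^ 2 := by nlinarith
    _ = RCLike.re ⟪T† ⟨T x, hx⟩ + (x : E), (x : E)⟫_𝕜 :=
      (re_inner_adjoint_apply_add_self hT x hx).symm
    _ ≤ ‖T† ⟨T x, hx⟩ + (x : E)‖ * ‖(x : E)‖ := re_inner_le_norm _ _

theorem eq_of_adjoint_apply_add_eq (hT : Dense (T.domain : Set E)) {x y : T.domain}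
    (hx : (T x : F) ∈ T†.domain) (hy : (T y : F) ∈ T†.domain)
    (h : T† ⟨T x, hx⟩ + (x : E) = T† ⟨T y, hy⟩ + (y : E)) : (x : E) = y := by
  have hxy : (T (x - y) : F) ∈ T†.domain := by
    rw [T.map_sub]
    exact sub_mem hx hy
  have hzero : T† ⟨T (x - y), hxy⟩ + (x - y : T.domain) = 0 := by
    have hsub : (⟨T (x - y), hxy⟩ : T†.domain) = ⟨T x, hx⟩ - ⟨T y, hy⟩ := by
      ext
      simp [T.map_sub]
    rw [hsub, map_sub, Submodule.coe_sub, sub_add_sub_comm, h, sub_self]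
  have hnorm := norm_le_norm_adjoint_apply_add hT (x - y) hxy
  rw [hzero, norm_zero, norm_le_zero_iff, Submodule.coe_sub] at hnorm
  exact sub_eq_zero.mp hnorm

theorem exists_adjoint_apply_add_eq [CompleteSpace F]
    (hT : Dense (T.domain : Set E)) (hclosed : T.IsClosed) (z : E) :
    ∃ (x : T.domain) (hx : (T x : F) ∈ T†.domain), T† ⟨T x, hx⟩ + (x : E) = z := by
  have : CompleteSpace T.graphL2 := hclosed.isClosed_graphL2.completeSpace_coe
  let v : WithLp 2 (E × F) := WithLp.toLp 2 (z, 0)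
  obtain ⟨x, hpx⟩ := mem_graphL2_iff.mp (T.graphL2.starProjection_apply_mem v)
  have horth : ∀ y : T.domain, ⟪z - x, (y : E)⟫_𝕜 = ⟪(T x : F), T y⟫_𝕜 := by
    intro y
    have hperp := T.graphL2.starProjection_inner_eq_zero v (WithLp.toLp 2 ((y : E), T y))
      (mem_graphL2_iff.mpr ⟨y, rfl⟩)
    simp only [WithLp.prod_inner_apply, WithLp.ofLp_sub, ← hpx] at hperp
    simpa [v, inner_sub_left, sub_eq_zero, ← sub_eq_add_neg] using hperp
  have hx : (T x : F) ∈ T†.domain := mem_adjoint_domain_of_exists _ ⟨_, horth⟩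
  exact ⟨x, hx, by rw [adjoint_apply_eq hT ⟨T x, hx⟩ horth, sub_add_cancel]⟩

end LinearPMap

/-- For a densely defined closed operator `T` on a complex Hilbert space, the operator
`T* T + 1` (with domain `{ξ ∈ dom T : T ξ ∈ dom T*}`) is injective, surjective onto `H`,
and its inverse is bounded. -/
theorem starT_T_add_one_bijective_boundedInverse
    (T : H →ₗ.[ℂ] H) (hdense : Dense (T.domain : Set H)) (hclosed : T.IsClosed) :
    (∀ (x y : T.domain) (hx : (T x : H) ∈ T.adjoint.domain)
        (hy : (T y : H) ∈ T.adjoint.domain),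
        T.adjoint ⟨(T x : H), hx⟩ + (x : H) = T.adjoint ⟨(T y : H), hy⟩ + (y : H) →
          (x : H) = (y : H)) ∧
    (∀ z : H, ∃ (x : T.domain) (hx : (T x : H) ∈ T.adjoint.domain),
        T.adjoint ⟨(T x : H), hx⟩ + (x : H) = z) ∧
    (∃ C : ℝ, ∀ (x : T.domain) (hx : (T x : H) ∈ T.adjoint.domain),
        ‖(x : H)‖ ≤ C * ‖T.adjoint ⟨(T x : H), hx⟩ + (x : H)‖) :=
  ⟨fun _ _ hx hy h => eq_of_adjoint_apply_add_eq hdense hx hy h,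
    exists_adjoint_apply_add_eq hdense hclosed,
    1, fun x hx => by simpa only [one_mul] using norm_le_norm_adjoint_apply_add hdense x hx⟩
end
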